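/- arXiv:1301.6862 — 2 statements merged into one kernel-verified Lean document; each statement's English description precedes it below -/
import Mathlib

section
/- If φ belongs to the space P̂ = P₃ ⊕ span{x³y − xy³} and φ vanishes at all twelve Gauss points g₁,…,g₁₂ of the square [−1,1]², then φ is the zero polynomial. -/
/-!
On each edge of the square, an element of `P̂` restricts to a cubic in the edge parameter; vanishing
at the three Gauss nodes `0, ±√(3/5)` forces it to be a multiple of the Legendre polynomial
`t³ - (3/5) t`. This gives three linear conditions per edge, twelve in all, on the eleven
coefficients of `φ`, and they admit only the zero solution.
-/

open MvPolynomial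

noncomputable def s : ℝ := Real.sqrt (3 / 5)

/-- The twelve Gauss points of the reference square `[-1,1]²`. -/
noncomputable def g : Fin 12 → ℝ × ℝ :=
  ![(-s, -1), (0, -1), (s, -1),
    (1, -s), (1, 0), (1, s),
    (s, 1), (0, 1), (-s, 1),
    (-1, s), (-1, 0), (-1, -s)]

open Finset

noncomputable def bideg (i j : ℕ) : Fin 2 →₀ ℕ := Finsupp.single 0 i + Finsupp.single 1 j

@[simp] lemma bideg_apply_zero (i j : ℕ) : bideg i j 0 = i := by simp [bideg]

@[simp] lemma bideg_apply_one (i j : ℕ) : bideg i j 1 = j := by simp [bideg]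

lemma bideg_apply_self (d : Fin 2 →₀ ℕ) : bideg (d 0) (d 1) = d := by
  ext i; fin_cases i <;> simp

lemma bideg_injective2 : Function.Injective2 bideg := fun _ _ _ _ h =>
  ⟨by simpa using congr($h 0), by simpa using congr($h 1)⟩

section TotalDegree

variable {R : Type*} [CommSemiring R] {n : ℕ} {p : MvPolynomial (Fin 2) R}

lemma add_le_of_mem_support {d : Fin 2 →₀ ℕ} (hp : p.totalDegree ≤ n) (hd : d ∈ p.support) :
    d 0 + d 1 ≤ n := by
  have := le_totalDegree hd
  rw [Finsupp.sum_fintype _ _ fun _ => rfl, Fin.sum_univ_two] at this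
  omega

lemma eval_eq_sum_bideg (hp : p.totalDegree ≤ n) (x y : R) :
    eval ![x, y] p =
      ∑ i ∈ range (n + 1), ∑ j ∈ range (n + 1 - i), coeff (bideg i j) p * x ^ i * y ^ j := by
  set T := (range (n + 1)).sigma fun i => range (n + 1 - i)
  have hsupp : p.support ⊆ T.image fun ij => bideg ij.1 ij.2 := by
    intro d hd
    have := add_le_of_mem_support hp hd
    exact mem_image.mpr ⟨⟨d 0, d 1⟩, by simp only [mem_sigma, mem_range, T]; omega, bideg_apply_self d⟩
  have hinj : Set.InjOn (fun ij : (_ : ℕ) × ℕ => bideg ij.1 ij.2) T := by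
    rintro ⟨i, j⟩ - ⟨k, l⟩ - h
    obtain ⟨rfl, rfl⟩ := bideg_injective2 h
    rfl
  rw [eval_eq', sum_subset hsupp fun d _ hd => by simp [notMem_support_iff.mp hd],
    sum_image hinj, sum_sigma]
  simp [Fin.prod_univ_two, mul_assoc]

lemma eq_zero_of_coeff_bideg_eq_zero (hp : p.totalDegree ≤ n)
    (h : ∀ i j, i + j ≤ n → coeff (bideg i j) p = 0) : p = 0 := by
  ext d
  by_contra hd
  exact hd (bideg_apply_self d ▸ h _ _ (add_le_of_mem_support hp (mem_support_iff.mpr hd)))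

end TotalDegree

lemma cubic_coeffs_of_symmetric_roots {r a b c d : ℝ} (hr : r ≠ 0) (f : ℝ → ℝ)
    (hf : ∀ t, f t = a + b * t + c * t ^ 2 + d * t ^ 3)
    (hneg : f (-r) = 0) (hzero : f 0 = 0) (hpos : f r = 0) :
    a = 0 ∧ c = 0 ∧ b + r ^ 2 * d = 0 := by
  rw [hf] at hneg hzero hpos
  have ha : a = 0 := by simpa using hzero
  subst ha
  have hc : r ^ 2 * c = 0 := by linear_combination (hneg + hpos) / 2
  have hb : r * (b + r ^ 2 * d) = 0 := by linear_combination (hpos - hneg) / 2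
  exact ⟨rfl, (mul_eq_zero.mp hc).resolve_left (pow_ne_zero 2 hr),
    (mul_eq_zero.mp hb).resolve_left hr⟩

def evalPHat (a : ℕ → ℕ → ℝ) (c x y : ℝ) : ℝ :=
  (∑ i ∈ range 4, ∑ j ∈ range (4 - i), a i j * x ^ i * y ^ j) + c * (x ^ 3 * y - x * y ^ 3)

lemma evalPHat_horizontal (a : ℕ → ℕ → ℝ) (c : ℝ) {ε : ℝ} (hε : ε ^ 2 = 1) (x : ℝ) :
    evalPHat a c x ε = (a 0 0 + a 0 1 * ε + a 0 2 + a 0 3 * ε)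
      + (a 1 0 + a 1 1 * ε + a 1 2 - c * ε) * x + (a 2 0 + a 2 1 * ε) * x ^ 2
      + (a 3 0 + c * ε) * x ^ 3 := by
  simp only [evalPHat, sum_range_succ, range_one, sum_singleton, tsub_zero, pow_zero, mul_one,
    pow_one, Nat.add_one_sub_one, Nat.reduceSub]
  linear_combination (a 0 2 + a 0 3 * ε + a 1 2 * x - c * x * ε) * hε

lemma evalPHat_vertical (a : ℕ → ℕ → ℝ) (c : ℝ) {ε : ℝ} (hε : ε ^ 2 = 1) (y : ℝ) :
    evalPHat a c ε y = (a 0 0 + a 1 0 * ε + a 2 0 + a 3 0 * ε)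
      + (a 0 1 + a 1 1 * ε + a 2 1 + c * ε) * y + (a 0 2 + a 1 2 * ε) * y ^ 2
      + (a 0 3 - c * ε) * y ^ 3 := by
  simp only [evalPHat, sum_range_succ, range_one, sum_singleton, tsub_zero, pow_zero, mul_one,
    pow_one, Nat.add_one_sub_one, Nat.reduceSub]
  linear_combination (a 2 0 + a 3 0 * ε + a 2 1 * y + c * y * ε) * hε

lemma sq_s : s ^ 2 = 3 / 5 := Real.sq_sqrt (by norm_num)

lemma s_ne_zero : s ≠ 0 := by
  intro h
  have := sq_s
  rw [h] at this
  norm_num at this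

lemma evalPHat_eq_zero_of_gauss {a : ℕ → ℕ → ℝ} {c : ℝ}
    (h : ∀ k, evalPHat a c (g k).1 (g k).2 = 0) :
    (∀ i j, i + j ≤ 3 → a i j = 0) ∧ c = 0 := by
  obtain ⟨b0, b2, b1⟩ := cubic_coeffs_of_symmetric_roots s_ne_zero _
    (evalPHat_horizontal a c (ε := -1) (by norm_num)) (h 0) (h 1) (h 2)
  obtain ⟨t0, t2, t1⟩ := cubic_coeffs_of_symmetric_roots s_ne_zero _
    (evalPHat_horizontal a c (ε := 1) (by norm_num)) (h 8) (h 7) (h 6)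
  obtain ⟨r0, r2, r1⟩ := cubic_coeffs_of_symmetric_roots s_ne_zero _
    (evalPHat_vertical a c (ε := 1) (by norm_num)) (h 3) (h 4) (h 5)
  obtain ⟨l0, l2, l1⟩ := cubic_coeffs_of_symmetric_roots s_ne_zero _
    (evalPHat_vertical a c (ε := -1) (by norm_num)) (h 11) (h 10) (h 9)
  rw [sq_s] at b1 t1 r1 l1
  refine ⟨fun i j hij => ?_, by linarith⟩
  have hi : i ≤ 3 := by omega
  have hj : j ≤ 3 := by omega
  interval_cases i <;> interval_cases j <;> first | omega | linarith

/-- Lemma 2.3 (unisolvency): if `φ ∈ P̂ = P₃ ⊕ span{x³y - xy³}` vanishes at all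
twelve Gauss points of `[-1,1]²`, then `φ = 0`. -/
theorem unisolvency (φ : MvPolynomial (Fin 2) ℝ)
    (hφ : ∃ (p : MvPolynomial (Fin 2) ℝ) (c : ℝ), p.totalDegree ≤ 3 ∧
      φ = p + C c * (X 0 ^ 3 * X 1 - X 0 * X 1 ^ 3))
    (hvan : ∀ j : Fin 12, eval ![(g j).1, (g j).2] φ = 0) :
    φ = 0 := by
  obtain ⟨p, c, hp, rfl⟩ := hφ
  have heval : ∀ x y, eval ![x, y] (p + C c * (X 0 ^ 3 * X 1 - X 0 * X 1 ^ 3)) =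
      evalPHat (fun i j => coeff (bideg i j) p) c x y := fun x y => by
    simp [eval_eq_sum_bideg hp, evalPHat]
  obtain ⟨hcoeff, rfl⟩ := evalPHat_eq_zero_of_gauss fun k => heval _ _ ▸ hvan k
  simp [eq_zero_of_coeff_bideg_eq_zero hp hcoeff]
end

section
/- If φ belongs to the space P₃ ⊕ span{x³y} (real bivariate polynomials of the form p(x,y) + c·x³y with p of total degree at most 3 and c ∈ ℝ) and φ vanishes at all twelve Gauss points g₁,…,g₁₂ of the square [−1,1]², then φ is the zero polynomial. -/
open MvPolynomial

noncomputable def e (i j : ℕ) : Fin 2 →₀ ℕ := Finsupp.single 0 i + Finsupp.single 1 j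

lemma e_apply0 (i j : ℕ) : e i j 0 = i := by simp [e, Finsupp.single_apply]
lemma e_apply1 (i j : ℕ) : e i j 1 = j := by simp [e, Finsupp.single_apply]

lemma e_eq_iff (i j k l : ℕ) : e i j = e k l ↔ i = k ∧ j = l := by
  constructor
  · intro h
    exact ⟨by simpa [e_apply0] using congrArg (fun f => f 0) h,
           by simpa [e_apply1] using congrArg (fun f => f 1) h⟩
  · rintro ⟨rfl, rfl⟩; rfl

lemma m_eq_e (m : Fin 2 →₀ ℕ) : m = e (m 0) (m 1) := by
  ext i; fin_cases i
  · simp [e_apply0]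
  · simp [e_apply1]

lemma mono_eq (i j : ℕ) (a : ℝ) :
    C a * X 0 ^ i * X 1 ^ j = (monomial (e i j) a : MvPolynomial (Fin 2) ℝ) := by
  rw [X_pow_eq_monomial, X_pow_eq_monomial, C_mul_monomial, monomial_mul, e]
  ring_nf

lemma sum_eq (m : Fin 2 →₀ ℕ) : (m.sum fun _ n => n) = m 0 + m 1 := by
  rw [Finsupp.sum_fintype _ _ (fun _ => rfl), Fin.sum_univ_two]

lemma rep (p : MvPolynomial (Fin 2) ℝ) (hp : p.totalDegree ≤ 3) :
    p = C (p.coeff (e 0 0)) + C (p.coeff (e 1 0)) * X 0 ^ 1 * X 1 ^ 0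
      + C (p.coeff (e 0 1)) * X 0 ^ 0 * X 1 ^ 1
      + C (p.coeff (e 2 0)) * X 0 ^ 2 * X 1 ^ 0
      + C (p.coeff (e 1 1)) * X 0 ^ 1 * X 1 ^ 1
      + C (p.coeff (e 0 2)) * X 0 ^ 0 * X 1 ^ 2
      + C (p.coeff (e 3 0)) * X 0 ^ 3 * X 1 ^ 0
      + C (p.coeff (e 2 1)) * X 0 ^ 2 * X 1 ^ 1
      + C (p.coeff (e 1 2)) * X 0 ^ 1 * X 1 ^ 2
      + C (p.coeff (e 0 3)) * X 0 ^ 0 * X 1 ^ 3 := by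
  have hC : (C (p.coeff (e 0 0)) : MvPolynomial (Fin 2) ℝ)
      = C (p.coeff (e 0 0)) * X 0 ^ 0 * X 1 ^ 0 := by ring
  ext m
  rw [hC]
  simp only [mono_eq, coeff_add, coeff_monomial]
  by_cases h : m 0 + m 1 ≤ 3
  · rw [m_eq_e m]
    have h0 : m 0 ≤ 3 := by omega
    have h1 : m 1 ≤ 3 := by omega
    interval_cases h2 : (m 0) <;> interval_cases h3 : (m 1) <;> simp_all [e_eq_iff]
  · have hz : p.coeff m = 0 := by
      apply coeff_eq_zero_of_totalDegree_lt
      calc p.totalDegree ≤ 3 := hp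
        _ < m 0 + m 1 := by omega
        _ = _ := (sum_eq m).symm
    rw [hz, m_eq_e m]
    simp only [e_eq_iff]
    have hne : ∀ i j : ℕ, i + j ≤ 3 → ¬(i = m 0 ∧ j = m 1) := by
      rintro i j hij ⟨rfl, rfl⟩; omega
    rw [if_neg (hne 0 0 (by norm_num)), if_neg (hne 1 0 (by norm_num)),
        if_neg (hne 0 1 (by norm_num)), if_neg (hne 2 0 (by norm_num)),
        if_neg (hne 1 1 (by norm_num)), if_neg (hne 0 2 (by norm_num)),
        if_neg (hne 3 0 (by norm_num)), if_neg (hne 2 1 (by norm_num)),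
        if_neg (hne 1 2 (by norm_num)), if_neg (hne 0 3 (by norm_num))]
    ring

set_option maxHeartbeats 1000000 in
/-- Remark 2.2: unisolvency also holds for the space `P₃ ⊕ span{x³y}`. -/
theorem unisolvency_x3y (φ : MvPolynomial (Fin 2) ℝ)
    (hφ : ∃ (p : MvPolynomial (Fin 2) ℝ) (c : ℝ), p.totalDegree ≤ 3 ∧
      φ = p + C c * (X 0 ^ 3 * X 1))
    (hvan : ∀ j : Fin 12, eval ![(g j).1, (g j).2] φ = 0) :
    φ = 0 := by
  obtain ⟨p, c, hp, hpc⟩ := hφ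
  set a00 := p.coeff (e 0 0) with h00
  set a10 := p.coeff (e 1 0) with h10
  set a01 := p.coeff (e 0 1) with h01
  set a20 := p.coeff (e 2 0) with h20
  set a11 := p.coeff (e 1 1) with h11
  set a02 := p.coeff (e 0 2) with h02
  set a30 := p.coeff (e 3 0) with h30
  set a21 := p.coeff (e 2 1) with h21
  set a12 := p.coeff (e 1 2) with h12
  set a03 := p.coeff (e 0 3) with h03
  have hrep : φ = C a00 + C a10 * X 0 ^ 1 * X 1 ^ 0
      + C a01 * X 0 ^ 0 * X 1 ^ 1
      + C a20 * X 0 ^ 2 * X 1 ^ 0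
      + C a11 * X 0 ^ 1 * X 1 ^ 1
      + C a02 * X 0 ^ 0 * X 1 ^ 2
      + C a30 * X 0 ^ 3 * X 1 ^ 0
      + C a21 * X 0 ^ 2 * X 1 ^ 1
      + C a12 * X 0 ^ 1 * X 1 ^ 2
      + C a03 * X 0 ^ 0 * X 1 ^ 3
      + C c * (X 0 ^ 3 * X 1) := by
    rw [hpc]; rw [rep p hp]
  have hev : ∀ x y : ℝ, eval ![x, y] φ =
      a00 + a10*x + a01*y + a20*x^2 + a11*x*y + a02*y^2
        + a30*x^3 + a21*x^2*y + a12*x*y^2 + a03*y^3 + c*x^3*y := by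
    intro x y
    rw [hrep]
    simp [Matrix.cons_val_zero, Matrix.cons_val_one, Matrix.head_cons]
    ring
  have hs2 : s^2 = 3/5 := Real.sq_sqrt (by norm_num)
  have hs0 : s ≠ 0 := by
    have : (0:ℝ) < s := Real.sqrt_pos.mpr (by norm_num)
    exact ne_of_gt this
  have E1 : eval ![-s, -1] φ = 0 := hvan 0
  have E2 : eval ![0, -1] φ = 0 := hvan 1
  have E3 : eval ![s, -1] φ = 0 := hvan 2
  have E4 : eval ![1, -s] φ = 0 := hvan 3
  have E5 : eval ![1, 0] φ = 0 := hvan 4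
  have E6 : eval ![1, s] φ = 0 := hvan 5
  have E7 : eval ![s, 1] φ = 0 := hvan 6
  have E8 : eval ![0, 1] φ = 0 := hvan 7
  have E9 : eval ![-s, 1] φ = 0 := hvan 8
  have E10 : eval ![-1, s] φ = 0 := hvan 9
  have E11 : eval ![-1, 0] φ = 0 := hvan 10
  have E12 : eval ![-1, -s] φ = 0 := hvan 11
  rw [hev] at E1 E2 E3 E4 E5 E6 E7 E8 E9 E10 E11 E12
  -- bottom edge y = -1
  have B0 : a00 - a01 + a02 - a03 = 0 := by linear_combination E2
  have Bs : (a00 - a01 + a02 - a03) + (3/5)*(a20 - a21) = 0 := by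
    linear_combination (1/2)*E1 + (1/2)*E3 - (a20 - a21)*hs2
  have Bd : (a10 - a11 + a12) + (3/5)*(a30 - c) = 0 := by
    have h : s * ((a10 - a11 + a12) + (3/5)*(a30 - c)) = 0 := by
      linear_combination (-1/2)*E1 + (1/2)*E3 - ((a30 - c)*s)*hs2
    exact (mul_eq_zero.mp h).resolve_left hs0
  -- top edge y = 1
  have T0 : a00 + a01 + a02 + a03 = 0 := by linear_combination E8
  have Ts : (a00 + a01 + a02 + a03) + (3/5)*(a20 + a21) = 0 := by
    linear_combination (1/2)*E7 + (1/2)*E9 - (a20 + a21)*hs2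
  have Td : (a10 + a11 + a12) + (3/5)*(a30 + c) = 0 := by
    have h : s * ((a10 + a11 + a12) + (3/5)*(a30 + c)) = 0 := by
      linear_combination (1/2)*E7 - (1/2)*E9 - ((a30 + c)*s)*hs2
    exact (mul_eq_zero.mp h).resolve_left hs0
  -- right edge x = 1
  have R0 : a00 + a10 + a20 + a30 = 0 := by linear_combination E5
  have Rs : (a00 + a10 + a20 + a30) + (3/5)*(a02 + a12) = 0 := by
    linear_combination (1/2)*E4 + (1/2)*E6 - (a02 + a12)*hs2
  have Rd : (a01 + a11 + a21 + c) + (3/5)*a03 = 0 := by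
    have h : s * ((a01 + a11 + a21 + c) + (3/5)*a03) = 0 := by
      linear_combination (-1/2)*E4 + (1/2)*E6 - (a03*s)*hs2
    exact (mul_eq_zero.mp h).resolve_left hs0
  -- left edge x = -1
  have L0 : a00 - a10 + a20 - a30 = 0 := by linear_combination E11
  have Ls : (a00 - a10 + a20 - a30) + (3/5)*(a02 - a12) = 0 := by
    linear_combination (1/2)*E10 + (1/2)*E12 - (a02 - a12)*hs2
  have Ld : (a01 - a11 + a21 - c) + (3/5)*a03 = 0 := by
    have h : s * ((a01 - a11 + a21 - c) + (3/5)*a03) = 0 := by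
      linear_combination (1/2)*E10 - (1/2)*E12 - (a03*s)*hs2
    exact (mul_eq_zero.mp h).resolve_left hs0
  have z20 : a20 = 0 := by linarith only [B0, Bs, Bd, T0, Ts, Td, R0, Rs, Rd, L0, Ls, Ld]
  have z21 : a21 = 0 := by linarith only [B0, Bs, Bd, T0, Ts, Td, R0, Rs, Rd, L0, Ls, Ld]
  have z02 : a02 = 0 := by linarith only [B0, Bs, Bd, T0, Ts, Td, R0, Rs, Rd, L0, Ls, Ld]
  have z12 : a12 = 0 := by linarith only [B0, Bs, Bd, T0, Ts, Td, R0, Rs, Rd, L0, Ls, Ld]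
  have z00 : a00 = 0 := by linarith only [B0, Bs, Bd, T0, Ts, Td, R0, Rs, Rd, L0, Ls, Ld]
  have z03 : a03 = 0 := by linarith only [B0, Bs, Bd, T0, Ts, Td, R0, Rs, Rd, L0, Ls, Ld]
  have z01 : a01 = 0 := by linarith only [B0, Bs, Bd, T0, Ts, Td, R0, Rs, Rd, L0, Ls, Ld]
  have z30 : a30 = 0 := by linarith only [B0, Bs, Bd, T0, Ts, Td, R0, Rs, Rd, L0, Ls, Ld]
  have z10 : a10 = 0 := by linarith only [B0, Bs, Bd, T0, Ts, Td, R0, Rs, Rd, L0, Ls, Ld]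
  have zc : c = 0 := by linarith only [B0, Bs, Bd, T0, Ts, Td, R0, Rs, Rd, L0, Ls, Ld]
  have z11 : a11 = 0 := by linarith only [B0, Bs, Bd, T0, Ts, Td, R0, Rs, Rd, L0, Ls, Ld]
  rw [hrep, z00, z10, z01, z20, z11, z02, z30, z21, z12, z03, zc]
  simp
end
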